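/- Qubit SU(2) covariance: the only channels on a qubit covariant with respect to the full adjoint action of SU(2) are E_λ(ρ) = ½(1 + λ r·σ) with λ ∈ [-1/3, 1], where r is the Bloch vector of ρ. Consequently, for η with Bloch vector x (writing x̄ = (x,-y,z)), the optimal value max_{E covariant} Tr[η^T E(ρ)] equals ½(1 + x̄·r) if x̄·r ≥ 0, and ½(1 - (1/3) x̄·r) otherwise. -/

import Mathlib

open Matrix
open scoped ComplexOrder

/-- Ampliation `id_k ⊗ L` of a linear map on matrices. -/
def amplA {k A B : Type} (L : Matrix A A ℂ →ₗ[ℂ] Matrix B B ℂ)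
    (M : Matrix (k × A) (k × A) ℂ) : Matrix (k × B) (k × B) ℂ :=
  fun p q => L (Matrix.of fun a b => M (p.1, a) (q.1, b)) p.2 q.2

/-- Complete positivity of a linear map between matrix algebras. -/
def IsCompletelyPositive {A B : Type} [Fintype A] [Fintype B]
    (L : Matrix A A ℂ →ₗ[ℂ] Matrix B B ℂ) : Prop :=
  ∀ (k : Type) [Fintype k] [DecidableEq k],
    ∀ M : Matrix (k × A) (k × A) ℂ, M.PosSemidef → (amplA L M).PosSemidef

/-- Covariance with respect to the (full) adjoint action of the unitary group of the
qubit (equivalently, the adjoint action of SU(2)). -/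
def IsUnitarilyCovariant (E : Matrix (Fin 2) (Fin 2) ℂ →ₗ[ℂ] Matrix (Fin 2) (Fin 2) ℂ) :
    Prop :=
  ∀ U : Matrix (Fin 2) (Fin 2) ℂ, U ∈ Matrix.unitaryGroup (Fin 2) ℂ →
    ∀ M : Matrix (Fin 2) (Fin 2) ℂ, E (U * M * Uᴴ) = U * E M * Uᴴ

noncomputable def pauliX : Matrix (Fin 2) (Fin 2) ℂ := !![0, 1; 1, 0]
noncomputable def pauliY : Matrix (Fin 2) (Fin 2) ℂ := !![0, -Complex.I; Complex.I, 0]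
noncomputable def pauliZ : Matrix (Fin 2) (Fin 2) ℂ := !![1, 0; 0, -1]

/-- Qubit state with Bloch vector `r`: `ρ = ½(𝟙 + r·σ)`. -/
noncomputable def blochState (r : Fin 3 → ℝ) : Matrix (Fin 2) (Fin 2) ℂ :=
  ((1 : ℝ) / 2) • ((1 : Matrix (Fin 2) (Fin 2) ℂ)
    + (r 0) • pauliX + (r 1) • pauliY + (r 2) • pauliZ)

open scoped Kronecker

/-! Covariance under the phase gate `diag(1, i)` forces `E` to map each matrix unit `eₐᵦ` to a
matrix supported where the phase `a - b` is the same; covariance under `X` swaps `e₀₀ ↔ e₁₁`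
and `e₀₁ ↔ e₁₀`; a single basis-mixing unitary then ties the diagonal of `E e₀₀` to the
coherence factor `λ = (E e₀₁)₀₁`, and trace preservation fixes `E = E_λ`. Evaluating the Choi
matrix `λ Ω + (1 - λ)/2 · 1` of `E_λ` on the maximally entangled vector and on an orthogonal one
gives `1 + 3λ ≥ 0` and `1 - λ ≥ 0`; conversely, the Pauli twirl identity exhibits
`E_λ = (1 + 3λ)/4 · id + (1 - λ)/4 · ∑ σ · σ` as a Kraus decomposition. The objective
`Tr[ηᵀ E_λ(ρ)] = (1 + λ x̄·r)/2` is affine in `λ`, so it is maximised at an endpoint. -/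

section Kraus

variable {A B : Type} [Fintype A]

def conjMap (K : Matrix B A ℂ) : Matrix A A ℂ →ₗ[ℂ] Matrix B B ℂ where
  toFun M := K * M * Kᴴ
  map_add' M N := by rw [Matrix.mul_add, Matrix.add_mul]
  map_smul' c M := by rw [Matrix.mul_smul, Matrix.smul_mul]; rfl

theorem amplA_conjMap {k : Type} [Fintype k] [DecidableEq k] (K : Matrix B A ℂ)
    (M : Matrix (k × A) (k × A) ℂ) :
    amplA (conjMap K) M = ((1 : Matrix k k ℂ) ⊗ₖ K) * M * ((1 : Matrix k k ℂ) ⊗ₖ K)ᴴ := by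
  ext p q
  simp [amplA, conjMap, Matrix.mul_apply, Fintype.sum_prod_type, Matrix.one_apply, ite_mul,
    apply_ite, Finset.sum_mul]

theorem isCompletelyPositive_conjMap [Fintype B] (K : Matrix B A ℂ) :
    IsCompletelyPositive (conjMap K) :=
  fun _ _ _ M hM => amplA_conjMap K M ▸ hM.mul_mul_conjTranspose_same _

theorem IsCompletelyPositive.add [Fintype B] {L₁ L₂ : Matrix A A ℂ →ₗ[ℂ] Matrix B B ℂ}
    (h₁ : IsCompletelyPositive L₁) (h₂ : IsCompletelyPositive L₂) :
    IsCompletelyPositive (L₁ + L₂) :=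
  fun k _ _ M hM => (h₁ k M hM).add (h₂ k M hM)

theorem IsCompletelyPositive.smul [Fintype B] {L : Matrix A A ℂ →ₗ[ℂ] Matrix B B ℂ}
    (h : IsCompletelyPositive L) {c : ℂ} (hc : 0 ≤ c) : IsCompletelyPositive (c • L) :=
  fun k _ _ M hM => (h k M hM).smul hc

end Kraus

/-- The parameter is complex so that covariance alone determines it; complete positivity then
forces it into `[-1/3, 1] ⊆ ℝ`. -/
noncomputable def depolarizing (l : ℂ) : Matrix (Fin 2) (Fin 2) ℂ →ₗ[ℂ] Matrix (Fin 2) (Fin 2) ℂ :=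
  l • LinearMap.id + ((1 - l) / 2) • (Matrix.traceLinearMap (Fin 2) ℂ ℂ).smulRight 1

theorem depolarizing_apply (l : ℂ) (M : Matrix (Fin 2) (Fin 2) ℂ) :
    depolarizing l M = l • M + ((1 - l) / 2) • (trace M • 1) := rfl

theorem depolarizing_ofReal_apply (l : ℝ) (M : Matrix (Fin 2) (Fin 2) ℂ) :
    depolarizing l M = l • M + (((1 - l) / 2) • (trace M • (1 : Matrix (Fin 2) (Fin 2) ℂ))) := by
  rw [depolarizing_apply, ← Complex.coe_smul, ← Complex.coe_smul]
  push_cast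
  rfl

theorem trace_depolarizing (l : ℂ) (M : Matrix (Fin 2) (Fin 2) ℂ) :
    trace (depolarizing l M) = trace M := by
  simp [depolarizing_apply, trace_smul, trace_one]
  ring

theorem isUnitarilyCovariant_depolarizing (l : ℂ) : IsUnitarilyCovariant (depolarizing l) := by
  intro U hU M
  have hUU : U * Uᴴ = 1 := mem_unitaryGroup_iff.mp hU
  have htr : trace (U * M * Uᴴ) = trace M := by
    have hUU' : Uᴴ * U = 1 := mem_unitaryGroup_iff'.mp hU
    rw [trace_mul_cycle, hUU', Matrix.one_mul]
  simp only [depolarizing_apply, htr, Matrix.mul_add, Matrix.add_mul, Matrix.mul_smul,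
    Matrix.smul_mul, Matrix.mul_one, hUU]

theorem pauliX_isHermitian : pauliX.IsHermitian := by
  ext i j; fin_cases i <;> fin_cases j <;> simp [pauliX]

theorem pauliY_isHermitian : pauliY.IsHermitian := by
  ext i j; fin_cases i <;> fin_cases j <;> simp [pauliY]

theorem pauliZ_isHermitian : pauliZ.IsHermitian := by
  ext i j; fin_cases i <;> fin_cases j <;> simp [pauliZ]

theorem pauli_twirl (M : Matrix (Fin 2) (Fin 2) ℂ) :
    M + pauliX * M * pauliXᴴ + pauliY * M * pauliYᴴ + pauliZ * M * pauliZᴴ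
      = (2 * trace M) • 1 := by
  rw [pauliX_isHermitian.eq, pauliY_isHermitian.eq, pauliZ_isHermitian.eq, eta_fin_two M]
  ext i j
  fin_cases i <;> fin_cases j <;>
    simp [pauliX, pauliY, pauliZ, trace_fin_two] <;> ring_nf <;> simp only [Complex.I_sq] <;> ring

theorem depolarizing_eq_kraus (l : ℂ) :
    depolarizing l = ((1 + 3 * l) / 4) • conjMap 1
      + ((1 - l) / 4) • (conjMap pauliX + conjMap pauliY + conjMap pauliZ) := by
  ext1 M
  have h := pauli_twirl M
  simp only [depolarizing_apply, LinearMap.add_apply, LinearMap.smul_apply, conjMap,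
    LinearMap.coe_mk, AddHom.coe_mk, Matrix.one_mul, conjTranspose_one, Matrix.mul_one]
  linear_combination (norm := module) ((l - 1) / 4) • h

theorem isCompletelyPositive_depolarizing {l : ℂ} (h₀ : 0 ≤ 1 + 3 * l) (h₁ : l ≤ 1) :
    IsCompletelyPositive (depolarizing l) := by
  rw [depolarizing_eq_kraus]
  refine ((isCompletelyPositive_conjMap 1).smul ?_).add
    ((((isCompletelyPositive_conjMap _).add (isCompletelyPositive_conjMap _)).add
      (isCompletelyPositive_conjMap _)).smul ?_)
  · exact div_nonneg h₀ (by norm_num)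
  · exact div_nonneg (sub_nonneg.mpr h₁) (by norm_num)

def maxEntangledVec : Fin 2 × Fin 2 → ℂ := fun p => if p.1 = p.2 then 1 else 0

theorem amplA_depolarizing_choi (l : ℂ) :
    amplA (depolarizing l) (vecMulVec maxEntangledVec (star maxEntangledVec))
      = l • vecMulVec maxEntangledVec (star maxEntangledVec) + ((1 - l) / 2) • 1 := by
  ext ⟨a, b⟩ ⟨c, d⟩
  fin_cases a <;> fin_cases b <;> fin_cases c <;> fin_cases d <;>
    simp [amplA, depolarizing_apply, maxEntangledVec, vecMulVec, trace_fin_two, one_apply]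

theorem isCompletelyPositive_depolarizing_iff {l : ℂ} :
    IsCompletelyPositive (depolarizing l) ↔ 0 ≤ 1 + 3 * l ∧ l ≤ 1 := by
  refine ⟨fun h => ?_, fun h => isCompletelyPositive_depolarizing h.1 h.2⟩
  have hJ := h (Fin 2) _ (posSemidef_vecMulVec_self_star maxEntangledVec)
  rw [amplA_depolarizing_choi] at hJ
  set J := l • vecMulVec maxEntangledVec (star maxEntangledVec)
    + ((1 - l) / 2) • (1 : Matrix _ _ ℂ)
  let offDiag : Fin 2 × Fin 2 → ℂ := fun p => if p.1 = p.2 then 0 else 1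
  have hΩ : star maxEntangledVec ⬝ᵥ (J *ᵥ maxEntangledVec) = 1 + 3 * l := by
    simp [J, dotProduct, mulVec, Fintype.sum_prod_type, maxEntangledVec, vecMulVec, one_apply]
    ring
  have hOff : star offDiag ⬝ᵥ (J *ᵥ offDiag) = 1 - l := by
    simp [J, offDiag, dotProduct, mulVec, Fintype.sum_prod_type, maxEntangledVec, vecMulVec,
      one_apply]
  exact ⟨hΩ ▸ hJ.dotProduct_mulVec_nonneg _,
    sub_nonneg.mp (hOff ▸ hJ.dotProduct_mulVec_nonneg _)⟩

theorem diagonal_conj_apply {n : Type} [Fintype n] [DecidableEq n] (d : n → ℂ)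
    (M : Matrix n n ℂ) (i j : n) :
    (diagonal d * M * (diagonal d)ᴴ) i j = d i * M i j * star (d j) := by
  simp [diagonal_conjTranspose, diagonal_mul, mul_diagonal]

noncomputable def phaseGate : Matrix (Fin 2) (Fin 2) ℂ := diagonal ![1, Complex.I]

/-- Any unitary mixing the two basis vectors would do; `√X` avoids square roots. -/
noncomputable def sqrtXGate : Matrix (Fin 2) (Fin 2) ℂ :=
  !![(1 + Complex.I) / 2, (1 - Complex.I) / 2; (1 - Complex.I) / 2, (1 + Complex.I) / 2]

theorem phaseGate_mem_unitaryGroup : phaseGate ∈ unitaryGroup (Fin 2) ℂ := by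
  rw [mem_unitaryGroup_iff, phaseGate, star_eq_conjTranspose, diagonal_conjTranspose,
    diagonal_mul_diagonal, ← diagonal_one]
  congr 1
  ext i; fin_cases i <;> simp

theorem pauliX_mem_unitaryGroup : pauliX ∈ unitaryGroup (Fin 2) ℂ := by
  rw [mem_unitaryGroup_iff, star_eq_conjTranspose, pauliX_isHermitian.eq]
  ext i j; fin_cases i <;> fin_cases j <;> simp [pauliX]

theorem sqrtXGate_mem_unitaryGroup : sqrtXGate ∈ unitaryGroup (Fin 2) ℂ := by
  rw [mem_unitaryGroup_iff]
  ext i j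
  simp only [mul_apply, Fin.sum_univ_two, star_apply]
  fin_cases i <;> fin_cases j <;> simp [sqrtXGate] <;> ring_nf <;> simp only [Complex.I_sq] <;> ring

theorem pauliX_conj_single (a b : Fin 2) :
    pauliX * single a b 1 * pauliXᴴ = single (a + 1) (b + 1) 1 := by
  rw [pauliX_isHermitian.eq]
  ext i j
  simp only [mul_apply, Fin.sum_univ_two]
  fin_cases a <;> fin_cases b <;> fin_cases i <;> fin_cases j <;> simp [pauliX]

theorem sqrtXGate_conj_single_zero_zero :
    sqrtXGate * single 0 0 1 * sqrtXGateᴴ = (1 / 2 : ℂ) • single 0 0 1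
      + (Complex.I / 2) • single 0 1 1 - (Complex.I / 2) • single 1 0 1
      + (1 / 2 : ℂ) • single 1 1 1 := by
  ext i j
  simp only [mul_apply, Fin.sum_univ_two]
  fin_cases i <;> fin_cases j <;> simp [sqrtXGate] <;> ring_nf <;> simp only [Complex.I_sq] <;> ring

namespace IsUnitarilyCovariant

variable {E : Matrix (Fin 2) (Fin 2) ℂ →ₗ[ℂ] Matrix (Fin 2) (Fin 2) ℂ}

theorem apply_single_apply_eq_zero (hE : IsUnitarilyCovariant E)
    {d : Fin 2 → ℂ} (hd : diagonal d ∈ unitaryGroup (Fin 2) ℂ) {a b i j : Fin 2}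
    (h : d a * star (d b) ≠ d i * star (d j)) : E (single a b 1) i j = 0 := by
  have hconj : diagonal d * single a b 1 * (diagonal d)ᴴ = (d a * star (d b)) • single a b 1 := by
    ext k l
    rw [diagonal_conj_apply]
    by_cases hk : a = k <;> by_cases hl : b = l <;> simp [hk, hl]
  have hij := congrFun₂ (hE _ hd (single a b 1)) i j
  rw [hconj, map_smul, Matrix.smul_apply, diagonal_conj_apply, smul_eq_mul] at hij
  have : (d a * star (d b) - d i * star (d j)) * E (single a b 1) i j = 0 := by
    linear_combination hij
  exact (mul_eq_zero.mp this).resolve_left (sub_ne_zero.mpr h)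

theorem apply_single_add_one (hE : IsUnitarilyCovariant E) (a b : Fin 2) :
    E (single (a + 1) (b + 1) 1) = pauliX * E (single a b 1) * pauliXᴴ := by
  rw [← pauliX_conj_single, hE _ pauliX_mem_unitaryGroup]

theorem apply_single_of_phase (hE : IsUnitarilyCovariant E) {a b i j : Fin 2}
    (h : ![1, Complex.I] a * star (![1, Complex.I] b)
      ≠ ![1, Complex.I] i * star (![1, Complex.I] j)) :
    E (single a b 1) i j = 0 :=
  hE.apply_single_apply_eq_zero phaseGate_mem_unitaryGroup h

theorem eq_of_apply_single_zero_eq {F : Matrix (Fin 2) (Fin 2) ℂ →ₗ[ℂ] Matrix (Fin 2) (Fin 2) ℂ}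
    (hE : IsUnitarilyCovariant E) (hF : IsUnitarilyCovariant F)
    (h₀₀ : E (single 0 0 1) = F (single 0 0 1)) (h₀₁ : E (single 0 1 1) = F (single 0 1 1)) :
    E = F := by
  refine ext_linearMap ℂ fun a b => LinearMap.ext_ring ?_
  simp only [LinearMap.comp_apply, singleLinearMap_apply]
  fin_cases a <;> fin_cases b
  · exact h₀₀
  · exact h₀₁
  · exact (hE.apply_single_add_one 0 1).trans (h₀₁ ▸ (hF.apply_single_add_one 0 1).symm)
  · exact (hE.apply_single_add_one 0 0).trans (h₀₀ ▸ (hF.apply_single_add_one 0 0).symm)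

theorem apply_single_zero_zero_sub (hE : IsUnitarilyCovariant E) :
    E (single 0 0 1) 0 0 - E (single 0 0 1) 1 1 = E (single 0 1 1) 0 1 := by
  have h₀₀_01 : E (single 0 0 1) 0 1 = 0 := hE.apply_single_of_phase (by norm_num [Complex.ext_iff])
  have h₀₀_10 : E (single 0 0 1) 1 0 = 0 := hE.apply_single_of_phase (by norm_num [Complex.ext_iff])
  have h₁₀_01 : E (single 1 0 1) 0 1 = 0 := hE.apply_single_of_phase (by norm_num [Complex.ext_iff])
  have h₁₁_01 : E (single 1 1 1) 0 1 = 0 := hE.apply_single_of_phase (by norm_num [Complex.ext_iff])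
  have h := congrFun₂ (hE _ sqrtXGate_mem_unitaryGroup (single 0 0 1)) 0 1
  rw [sqrtXGate_conj_single_zero_zero] at h
  simp only [map_add, map_sub, map_smul, Matrix.add_apply, Matrix.sub_apply, Matrix.smul_apply,
    smul_eq_mul, h₀₀_01, h₁₀_01, h₁₁_01, mul_apply, Fin.sum_univ_two, conjTranspose_apply] at h
  simp [sqrtXGate, h₀₀_10] at h
  -- With `p, q` the diagonal of `E e₀₀` and `λ = (E e₀₁)₀₁`, `h` now reads
  -- `(i/2) λ = ((1 + i)/2)² p + ((1 - i)/2)² q = (i/2)(p - q)`.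
  linear_combination (2 * Complex.I) * h + ((Complex.I + 2) / 2 * E (single 0 0 1) 0 0
    + (Complex.I - 2) / 2 * E (single 0 0 1) 1 1 - E (single 0 1 1) 0 1) * Complex.I_sq

theorem eq_depolarizing (hE : IsUnitarilyCovariant E) (hTP : ∀ M, trace (E M) = trace M) :
    E = depolarizing (E (single 0 1 1) 0 1) := by
  refine hE.eq_of_apply_single_zero_eq (isUnitarilyCovariant_depolarizing _) ?_ ?_
  · have htr : E (single 0 0 1) 0 0 + E (single 0 0 1) 1 1 = 1 := by
      simpa [trace_fin_two] using hTP (single 0 0 1)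
    have hsub := hE.apply_single_zero_zero_sub
    ext i j
    fin_cases i <;> fin_cases j <;> simp [depolarizing_apply]
    · linear_combination (htr + hsub) / 2
    · exact hE.apply_single_of_phase (by norm_num [Complex.ext_iff])
    · exact hE.apply_single_of_phase (by norm_num [Complex.ext_iff])
    · linear_combination (htr - hsub) / 2
  · ext i j
    fin_cases i <;> fin_cases j <;> simp [depolarizing_apply] <;>
      exact hE.apply_single_of_phase (by norm_num [Complex.ext_iff])

end IsUnitarilyCovariant

theorem covariant_channel_iff_eq_depolarizing
    (E : Matrix (Fin 2) (Fin 2) ℂ →ₗ[ℂ] Matrix (Fin 2) (Fin 2) ℂ) :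
    (IsCompletelyPositive E ∧ (∀ M, trace (E M) = trace M) ∧ IsUnitarilyCovariant E)
      ↔ ∃ t : ℝ, t ∈ Set.Icc (-(1 / 3) : ℝ) 1 ∧ E = depolarizing t := by
  constructor
  · rintro ⟨hCP, hTP, hCov⟩
    rw [hCov.eq_depolarizing hTP] at hCP ⊢
    generalize E (single 0 1 1) 0 1 = l at hCP ⊢
    obtain ⟨h₀, h₁⟩ := isCompletelyPositive_depolarizing_iff.mp hCP
    obtain ⟨t, rfl⟩ : ∃ t : ℝ, (t : ℂ) = l :=
      ⟨l.re, Complex.ext rfl (by simpa using (Complex.le_def.mp h₁).2.symm)⟩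
    refine ⟨t, ⟨?_, ?_⟩, rfl⟩
    · have : (0 : ℝ) ≤ 1 + 3 * t := by exact_mod_cast h₀
      linarith
    · exact_mod_cast h₁
  · rintro ⟨t, ⟨ht₀, ht₁⟩, rfl⟩
    refine ⟨isCompletelyPositive_depolarizing_iff.mpr ⟨?_, ?_⟩, trace_depolarizing _,
      isUnitarilyCovariant_depolarizing _⟩
    · exact_mod_cast (by linarith : (0 : ℝ) ≤ 1 + 3 * t)
    · exact_mod_cast ht₁

theorem trace_blochState (r : Fin 3 → ℝ) : trace (blochState r) = 1 := by
  simp [blochState, pauliX, pauliY, pauliZ, trace_fin_two]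

theorem trace_transpose_blochState_mul_blochState (x r : Fin 3 → ℝ) :
    trace ((blochState x)ᵀ * blochState r)
      = ((1 + (x 0 * r 0 - x 1 * r 1 + x 2 * r 2)) / 2 : ℝ) := by
  simp only [trace_fin_two, mul_apply, Fin.sum_univ_two, transpose_apply]
  simp [blochState, pauliX, pauliY, pauliZ]
  linear_combination ((x 1 : ℂ) * r 1 / 2) * Complex.I_sq

theorem re_trace_transpose_blochState_mul_depolarizing (x r : Fin 3 → ℝ) (t : ℝ) :
    (trace ((blochState x)ᵀ * depolarizing t (blochState r))).re
      = (1 + t * (x 0 * r 0 - x 1 * r 1 + x 2 * r 2)) / 2 := by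
  rw [depolarizing_apply, trace_blochState, Matrix.mul_add, Matrix.mul_smul, Matrix.mul_smul,
    Matrix.mul_smul, Matrix.mul_one, trace_add, trace_smul, trace_smul, trace_smul,
    trace_transpose, trace_blochState, trace_transpose_blochState_mul_blochState]
  simp
  ring

theorem su2_covariant_qubit_channels_general (r x : Fin 3 → ℝ) :
    (∀ E : Matrix (Fin 2) (Fin 2) ℂ →ₗ[ℂ] Matrix (Fin 2) (Fin 2) ℂ,
      (IsCompletelyPositive E ∧ (∀ M, Matrix.trace (E M) = Matrix.trace M) ∧
          IsUnitarilyCovariant E)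
        ↔ ∃ l : ℝ, l ∈ Set.Icc (-(1 / 3) : ℝ) 1 ∧
            ∀ M, E M = l • M + (((1 - l) / 2) • (Matrix.trace M • (1 : Matrix (Fin 2) (Fin 2) ℂ))))
    ∧ IsGreatest
        {t : ℝ | ∃ E : Matrix (Fin 2) (Fin 2) ℂ →ₗ[ℂ] Matrix (Fin 2) (Fin 2) ℂ,
          IsCompletelyPositive E ∧ (∀ M, Matrix.trace (E M) = Matrix.trace M) ∧
          IsUnitarilyCovariant E ∧
          t = (Matrix.trace ((blochState x)ᵀ * E (blochState r))).re}
        (if 0 ≤ x 0 * r 0 - x 1 * r 1 + x 2 * r 2 then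
          (1 + (x 0 * r 0 - x 1 * r 1 + x 2 * r 2)) / 2
        else (1 - (x 0 * r 0 - x 1 * r 1 + x 2 * r 2) / 3) / 2) := by
  refine ⟨fun E => ?_, ?_, ?_⟩
  · simp only [covariant_channel_iff_eq_depolarizing, LinearMap.ext_iff, depolarizing_ofReal_apply]
  · have hmem : ∀ t ∈ Set.Icc (-(1 / 3) : ℝ) 1, ∃ E, IsCompletelyPositive E ∧
        (∀ M, trace (E M) = trace M) ∧ IsUnitarilyCovariant E ∧
        (1 + t * (x 0 * r 0 - x 1 * r 1 + x 2 * r 2)) / 2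
          = (trace ((blochState x)ᵀ * E (blochState r))).re := fun t ht => by
      obtain ⟨hCP, hTP, hCov⟩ := (covariant_channel_iff_eq_depolarizing _).mpr ⟨t, ht, rfl⟩
      exact ⟨_, hCP, hTP, hCov, (re_trace_transpose_blochState_mul_depolarizing x r t).symm⟩
    split_ifs
    · simpa using hmem 1 (by norm_num)
    · have h := hmem (-(1 / 3)) (by norm_num)
      rwa [show ∀ s : ℝ, (1 + -(1 / 3) * s) / 2 = (1 - s / 3) / 2 from fun s => by ring] at h
  · rintro _ ⟨E, hCP, hTP, hCov, rfl⟩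
    obtain ⟨t, ⟨ht₀, ht₁⟩, rfl⟩ := (covariant_channel_iff_eq_depolarizing E).mp ⟨hCP, hTP, hCov⟩
    rw [re_trace_transpose_blochState_mul_depolarizing]
    split_ifs <;> nlinarith

/-- classification of SU(2)-covariant qubit channels as the depolarizing /
inverting family `E_λ` with `λ ∈ [-1/3, 1]`, and the resulting optimal value of
`Tr[η^T E(ρ)]` over covariant channels, equal to `½(1 + x̄·r)` if `x̄·r ≥ 0` and to
`½(1 - x̄·r/3)` otherwise, where `x̄ = (x₁, -x₂, x₃)`. -/
theorem su2_covariant_qubit_channels (r x : Fin 3 → ℝ)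
    (hr : (r 0) ^ 2 + (r 1) ^ 2 + (r 2) ^ 2 ≤ 1)
    (hx : (x 0) ^ 2 + (x 1) ^ 2 + (x 2) ^ 2 ≤ 1) :
    (∀ E : Matrix (Fin 2) (Fin 2) ℂ →ₗ[ℂ] Matrix (Fin 2) (Fin 2) ℂ,
      (IsCompletelyPositive E ∧ (∀ M, Matrix.trace (E M) = Matrix.trace M) ∧
          IsUnitarilyCovariant E)
        ↔ ∃ l : ℝ, l ∈ Set.Icc (-(1 / 3) : ℝ) 1 ∧
            ∀ M, E M = l • M + (((1 - l) / 2) • (Matrix.trace M • (1 : Matrix (Fin 2) (Fin 2) ℂ))))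
    ∧ IsGreatest
        {t : ℝ | ∃ E : Matrix (Fin 2) (Fin 2) ℂ →ₗ[ℂ] Matrix (Fin 2) (Fin 2) ℂ,
          IsCompletelyPositive E ∧ (∀ M, Matrix.trace (E M) = Matrix.trace M) ∧
          IsUnitarilyCovariant E ∧
          t = (Matrix.trace ((blochState x)ᵀ * E (blochState r))).re}
        (if 0 ≤ x 0 * r 0 - x 1 * r 1 + x 2 * r 2 then
          (1 + (x 0 * r 0 - x 1 * r 1 + x 2 * r 2)) / 2
        else (1 - (x 0 * r 0 - x 1 * r 1 + x 2 * r 2) / 3) / 2) :=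
  su2_covariant_qubit_channels_general r x
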